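/- Let 0 < α and let x ≥ 2 be a real number. Let Y_x be the largest positive integer such that the primorial P(Y_x) = Π_{p ≤ Y_x, p prime} p satisfies P(Y_x) ≤ x. Then max over positive integers n ≤ x of Σ_{p | n, p prime} p^{−α} equals Σ_{p ≤ Y_x, p prime} p^{−α}. -/

import Mathlib

open Finset Real

/-- The primorialUpTo `P(y) = ∏_{p ≤ y, p prime} p`. -/
def primorialUpTo (y : ℕ) : ℕ := ∏ p ∈ (Finset.Icc 1 y).filter Nat.Prime, p

/-- If `Y` is the largest positive integer with `P(Y) ≤ x`, then the maximum of
`∑_{p ∣ n} p^{-α}` over positive integers `n ≤ x` equals `∑_{p ≤ Y} p^{-α}`. -/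
theorem stmt8 (α : ℝ) (hα : 0 < α) (x : ℝ) (hx : 2 ≤ x)
    (Y : ℕ) (hY : 0 < Y) (hYle : (primorialUpTo Y : ℝ) ≤ x)
    (hYmax : ∀ z : ℕ, Y < z → x < (primorialUpTo z : ℝ)) :
    IsGreatest
      {v : ℝ | ∃ n : ℕ, 0 < n ∧ (n : ℝ) ≤ x ∧
        v = ∑ p ∈ n.primeFactors, (p : ℝ) ^ (-α)}
      (∑ p ∈ (Finset.Icc 1 Y).filter Nat.Prime, (p : ℝ) ^ (-α)) := by
  classical
  have hinf := Nat.infinite_setOf_prime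
  set T := (Finset.Icc 1 Y).filter Nat.Prime with hT
  have hTprime : ∀ q ∈ T, Nat.Prime q := fun q hq => (Finset.mem_filter.1 hq).2
  constructor
  · refine ⟨primorialUpTo Y, ?_, hYle, ?_⟩
    · exact Finset.prod_pos fun q hq => (hTprime q hq).pos
    · rw [show (primorialUpTo Y).primeFactors = T from Nat.primeFactors_prod hTprime]
  · rintro v ⟨n, hn, hnx, rfl⟩
    set S := n.primeFactors with hS
    set P : ℕ → Prop := (· ∈ S) with hP
    have hfin : (Set.ofPred P).Finite := S.finite_toSet
    set k := S.card with hk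
    have hcard : #hfin.toFinset = k := by
      simp [hP, hk]
    have hSprime : ∀ q ∈ S, Nat.Prime q := fun q hq => Nat.prime_of_mem_primeFactors hq
    have hmem : ∀ i < k, Nat.nth P i ∈ S := fun i hi => by
      have := Nat.nth_mem_of_lt_card hfin (by rwa [hcard])
      simpa [hP] using this
    have hcount : ∀ i < k, Nat.count P (Nat.nth P i + 1) = i + 1 := fun i hi => by
      rw [Nat.count_succ, if_pos (show P (Nat.nth P i) from hmem i hi),
        Nat.count_nth_of_lt_card_finite hfin (by rwa [hcard])]
    have hle : ∀ i < k, Nat.nth Nat.Prime i ≤ Nat.nth P i := fun i hi => by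
      have h2 : Nat.count P (Nat.nth P i + 1) ≤ Nat.count Nat.Prime (Nat.nth P i + 1) := by
        rw [Nat.count_eq_card_filter_range, Nat.count_eq_card_filter_range]
        exact Finset.card_le_card (Finset.monotone_filter_right _ (fun q _ hq => hSprime q hq))
      have h1 : i < Nat.count Nat.Prime (Nat.nth P i + 1) := by
        have := hcount i hi; omega
      exact Nat.lt_succ_iff.mp (Nat.nth_lt_of_lt_count h1)
    have hprodn : (∏ q ∈ S, q) ≤ n := Nat.le_of_dvd hn (Nat.prod_primeFactors_dvd n)
    have hinjP : ∀ i ≤ k, Set.InjOn (Nat.nth P) ↑(Finset.range i) := fun i hik => by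
      intro a ha b hb hab
      have hIio : (↑(Finset.range i) : Set ℕ) ⊆ Set.Iio (#hfin.toFinset) := by
        intro y hy
        simp only [Finset.coe_range, Set.mem_Iio] at hy ⊢
        omega
      exact Nat.nth_injOn hfin (hIio ha) (hIio hb) hab
    have hprodS : ∀ i < k, (∏ j ∈ Finset.range (i + 1), Nat.nth P j) ≤ ∏ q ∈ S, q :=
      fun i hi => by
      have himg2 : (∏ j ∈ Finset.range (i + 1), Nat.nth P j)
          = ∏ q ∈ (Finset.range (i + 1)).image (Nat.nth P), q :=
        (Finset.prod_image (g := Nat.nth P) (f := id) (fun a ha b hb hab => hinjP (i + 1) hi ha hb hab)).symm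
      rw [himg2]
      refine Finset.prod_le_prod_of_subset_of_one_le' ?_ (fun q hq _ => (hSprime q hq).one_lt.le)
      intro q hq
      obtain ⟨j, hj, rfl⟩ := Finset.mem_image.1 hq
      exact hmem j (by have := Finset.mem_range.1 hj; omega)
    have hnthY : ∀ i < k, Nat.nth Nat.Prime i ≤ Y := by
      intro i hi
      by_contra hgt
      push_neg at hgt
      have hx2 := hYmax _ hgt
      have himg : (Finset.Icc 1 (Nat.nth Nat.Prime i)).filter Nat.Prime
          = (Finset.range (i + 1)).image (Nat.nth Nat.Prime) := by
        ext q
        simp only [Finset.mem_filter, Finset.mem_Icc, Finset.mem_image, Finset.mem_range]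
        constructor
        · rintro ⟨⟨h1, h2⟩, hq⟩
          refine ⟨Nat.count Nat.Prime q, ?_, Nat.nth_count hq⟩
          have hcq : Nat.count Nat.Prime q ≤ Nat.count Nat.Prime (Nat.nth Nat.Prime i) :=
            Nat.count_monotone _ h2
          rw [Nat.count_nth_of_infinite hinf] at hcq
          omega
        · rintro ⟨j, hj, rfl⟩
          have hp := Nat.nth_mem_of_infinite hinf j
          exact ⟨⟨hp.pos, Nat.nth_monotone hinf (by omega)⟩, hp⟩
      have heq : primorialUpTo (Nat.nth Nat.Prime i)
          = ∏ j ∈ Finset.range (i + 1), Nat.nth Nat.Prime j := by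
        rw [primorialUpTo, himg,
          Finset.prod_image (fun a _ b _ h => Nat.nth_injective hinf h)]
      have hb : (∏ j ∈ Finset.range (i + 1), Nat.nth Nat.Prime j)
          ≤ ∏ j ∈ Finset.range (i + 1), Nat.nth P j := by
        refine Finset.prod_le_prod' fun j hj => hle j ?_
        have := Finset.mem_range.1 hj; omega
      have hfinal : primorialUpTo (Nat.nth Nat.Prime i) ≤ n := by
        rw [heq]
        exact le_trans hb (le_trans (hprodS i hi) hprodn)
      have : (primorialUpTo (Nat.nth Nat.Prime i) : ℝ) ≤ n := Nat.cast_le.2 hfinal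
      linarith
    have hSimg : S = (Finset.range k).image (Nat.nth P) := by
      ext q
      simp only [Finset.mem_image, Finset.mem_range]
      constructor
      · intro hq
        refine ⟨Nat.count P q, ?_, Nat.nth_count (show P q from hq)⟩
        have := Nat.count_lt_card hfin (show P q from hq)
        rwa [hcard] at this
      · rintro ⟨j, hj, rfl⟩
        exact hmem j hj
    calc ∑ p ∈ n.primeFactors, (p : ℝ) ^ (-α)
        = ∑ j ∈ Finset.range k, ((Nat.nth P j : ℝ)) ^ (-α) := by
          rw [show n.primeFactors = S from rfl, hSimg,
            Finset.sum_image (fun a ha b hb hab => hinjP k le_rfl ha hb hab)]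
      _ ≤ ∑ j ∈ Finset.range k, ((Nat.nth Nat.Prime j : ℝ)) ^ (-α) := by
          refine Finset.sum_le_sum fun j hj => ?_
          have hjk := Finset.mem_range.1 hj
          have hp := Nat.nth_mem_of_infinite hinf j
          refine Real.rpow_le_rpow_of_nonpos ?_ ?_ (by linarith)
          · exact_mod_cast hp.pos
          · exact_mod_cast hle j hjk
      _ = ∑ q ∈ (Finset.range k).image (Nat.nth Nat.Prime), (q : ℝ) ^ (-α) := by
          rw [Finset.sum_image (fun a _ b _ h => Nat.nth_injective hinf h)]
      _ ≤ ∑ q ∈ T, (q : ℝ) ^ (-α) := by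
          refine Finset.sum_le_sum_of_subset_of_nonneg ?_
            (fun q _ _ => Real.rpow_nonneg (Nat.cast_nonneg q) _)
          intro q hq
          obtain ⟨j, hj, rfl⟩ := Finset.mem_image.1 hq
          have hjk := Finset.mem_range.1 hj
          have hp := Nat.nth_mem_of_infinite hinf j
          exact Finset.mem_filter.2 ⟨Finset.mem_Icc.2 ⟨hp.pos, hnthY j hjk⟩, hp⟩
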